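/- arXiv:1009.4706 — 3 statements merged into one kernel-verified Lean document; each statement's English description precedes it below -/
import Mathlib

section
/- Let n ≥ 1, let α, β, β' ∈ ℂⁿ and κ, κ' ∈ ℂ. Let L and L' be n×n matrices over ℂ((z)), both of order ≥ −1, with L_{−1} = α·βᵀ, L'_{−1} = α·β'ᵀ, βᵀα = 0, β'ᵀα = 0, L_0·α = κ·α and L'_0·α = κ'·α. Then the product L·L' again has order ≥ −1, and there exist β'' ∈ ℂⁿ and κ'' ∈ ℂ such that (L·L')_{−1} = α·β''ᵀ with β''ᵀα = 0, and (L·L')_0·α = κ''·α. (This is the assertion that for g = gl(n) the space of Lax operators is also closed under pointwise multiplication, localized at a Tyurin point γ.) -/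
/-!
Both factors have at most a simple pole, so `(L L')_{-2} = α βᵀ α β'ᵀ = (βᵀ α) α β'ᵀ = 0`.
Using `L_0 α = κ α`, the residue `α βᵀ L'_0 + L_0 α β'ᵀ` equals `α (βᵀ L'_0 + κ β'ᵀ)`, and
`(βᵀ L'_0 + κ β'ᵀ) α = κ' βᵀ α + κ β'ᵀ α = 0`. Finally
`(L L')_0 α = α βᵀ L'_1 α + L_0 L'_0 α + L_1 α β'ᵀ α = (βᵀ L'_1 α + κ κ') α`.
-/

open Matrix

/-- The matrix of `z^k`-coefficients of a matrix of formal Laurent series. -/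
noncomputable def coeffM {n : ℕ} (A : Matrix (Fin n) (Fin n) (LaurentSeries ℂ)) (k : ℤ) :
    Matrix (Fin n) (Fin n) ℂ :=
  fun i j => (A i j).coeff k

/-- `A` has order `≥ m`: all coefficients below `m` vanish. -/
def ordGE {n : ℕ} (A : Matrix (Fin n) (Fin n) (LaurentSeries ℂ)) (m : ℤ) : Prop :=
  ∀ k : ℤ, k < m → coeffM A k = 0

theorem LaurentSeries.coeff_mul_eq_sum_Icc {R : Type*} [NonUnitalNonAssocSemiring R]
    {x y : LaurentSeries R} {m m' : ℤ} (hx : ∀ a < m, x.coeff a = 0)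
    (hy : ∀ b < m', y.coeff b = 0) (k : ℤ) :
    (x * y).coeff k = ∑ a ∈ Finset.Icc m (k - m'), x.coeff a * y.coeff (k - a) := by
  have hinj : Set.InjOn (fun a : ℤ => (a, k - a)) (Finset.Icc m (k - m')) :=
    fun a _ b _ h => congrArg Prod.fst h
  rw [HahnSeries.coeff_mul, ← Finset.sum_image (f := fun ij => x.coeff ij.1 * y.coeff ij.2) hinj]
  refine Finset.sum_subset (fun ij hij => ?_) (fun ij hij hnot => ?_)
  · obtain ⟨hxij, hyij, hk⟩ := Finset.mem_antidiagonal.mp hij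
    have hm : m ≤ ij.1 := not_lt.mp fun h => hxij (hx _ h)
    have hm' : m' ≤ ij.2 := not_lt.mp fun h => hyij (hy _ h)
    exact Finset.mem_image.mpr ⟨ij.1, Finset.mem_Icc.mpr ⟨hm, by omega⟩, Prod.ext rfl (by omega)⟩
  · obtain ⟨a, -, rfl⟩ := Finset.mem_image.mp hij
    by_contra hne
    exact hnot (Finset.mem_antidiagonal.mpr
      ⟨left_ne_zero_of_mul hne, right_ne_zero_of_mul hne, add_sub_cancel a k⟩)

section

variable {n : ℕ} {A B : Matrix (Fin n) (Fin n) (LaurentSeries ℂ)} {m m' : ℤ}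

theorem coeffM_mul_eq_sum_Icc (hA : ordGE A m) (hB : ordGE B m') (k : ℤ) :
    coeffM (A * B) k = ∑ a ∈ Finset.Icc m (k - m'), coeffM A a * coeffM B (k - a) := by
  ext i j
  simp only [coeffM, Matrix.mul_apply, Matrix.sum_apply, HahnSeries.coeff_sum]
  rw [Finset.sum_comm]
  refine Finset.sum_congr rfl fun l _ => LaurentSeries.coeff_mul_eq_sum_Icc
    (fun a ha => congrFun₂ (hA a ha) i l) (fun b hb => congrFun₂ (hB b hb) l j) k

theorem ordGE_mul_add_one (hA : ordGE A m) (hB : ordGE B m')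
    (h : coeffM A m * coeffM B m' = 0) : ordGE (A * B) (m + m' + 1) := by
  intro k hk
  rw [coeffM_mul_eq_sum_Icc hA hB]
  rcases (show k ≤ m + m' by omega).lt_or_eq with hlt | rfl
  · rw [Finset.Icc_eq_empty (by omega), Finset.sum_empty]
  · rw [add_sub_cancel_right, Finset.Icc_self, Finset.sum_singleton, add_sub_cancel_left, h]

theorem coeffM_mul_neg_one (hA : ordGE A (-1)) (hB : ordGE B (-1)) :
    coeffM (A * B) (-1) = coeffM A (-1) * coeffM B 0 + coeffM A 0 * coeffM B (-1) := by
  rw [coeffM_mul_eq_sum_Icc hA hB, show Finset.Icc (-1 : ℤ) (-1 - -1) = {-1, 0} by decide]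
  simp

theorem coeffM_mul_zero (hA : ordGE A (-1)) (hB : ordGE B (-1)) :
    coeffM (A * B) 0 = coeffM A (-1) * coeffM B 1 + coeffM A 0 * coeffM B 0
      + coeffM A 1 * coeffM B (-1) := by
  rw [coeffM_mul_eq_sum_Icc hA hB, show Finset.Icc (-1 : ℤ) (0 - -1) = {-1, 0, 1} by decide]
  simp [add_assoc]

/-- The Tyurin parameter `α` is fixed, while the data `β`, `κ` may vary from operator to operator. -/
def IsLaxOperator (α : Fin n → ℂ) (L : Matrix (Fin n) (Fin n) (LaurentSeries ℂ)) : Prop :=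
  ordGE L (-1) ∧ ∃ (β : Fin n → ℂ) (κ : ℂ),
    coeffM L (-1) = vecMulVec α β ∧ β ⬝ᵥ α = 0 ∧ (coeffM L 0).mulVec α = κ • α

theorem IsLaxOperator.mul {α : Fin n → ℂ} {L L' : Matrix (Fin n) (Fin n) (LaurentSeries ℂ)}
    (hL : IsLaxOperator α L) (hL' : IsLaxOperator α L') : IsLaxOperator α (L * L') := by
  obtain ⟨hLord, β, κ, hLm1, hβα, hL0⟩ := hL
  obtain ⟨hL'ord, β', κ', hL'm1, hβ'α, hL'0⟩ := hL'
  refine ⟨ordGE_mul_add_one hLord hL'ord ?_, β ᵥ* coeffM L' 0 + κ • β',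
    β ⬝ᵥ (coeffM L' 1 *ᵥ α) + κ * κ', ?_, ?_, ?_⟩
  · rw [hLm1, hL'm1, vecMulVec_mul_vecMulVec, hβα, zero_smul, vecMulVec_zero]
  · rw [coeffM_mul_neg_one hLord hL'ord, hLm1, hL'm1, vecMulVec_mul, mul_vecMulVec, hL0,
      vecMulVec_add, smul_vecMulVec, vecMulVec_smul]
  · rw [add_dotProduct, smul_dotProduct, ← dotProduct_mulVec, hL'0, dotProduct_smul, hβα, hβ'α,
      smul_zero, smul_zero, add_zero]
  · rw [coeffM_mul_zero hLord hL'ord, hLm1, hL'm1]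
    simp only [add_mulVec, ← mulVec_mulVec, vecMulVec_mulVec, op_smul_eq_smul, hL'0, hβ'α,
      mulVec_smul, hL0, zero_smul, mulVec_zero, add_zero, smul_smul, add_smul, mul_comm κ']

end

theorem lax_gl_product_closed_general (n : ℕ)
    (α β β' : Fin n → ℂ) (κ κ' : ℂ)
    (L L' : Matrix (Fin n) (Fin n) (LaurentSeries ℂ))
    (hLord : ordGE L (-1)) (hL'ord : ordGE L' (-1))
    (hLm1 : coeffM L (-1) = vecMulVec α β)
    (hL'm1 : coeffM L' (-1) = vecMulVec α β')
    (hβα : β ⬝ᵥ α = 0) (hβ'α : β' ⬝ᵥ α = 0)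
    (hL0 : (coeffM L 0).mulVec α = κ • α)
    (hL'0 : (coeffM L' 0).mulVec α = κ' • α) :
    ordGE (L * L') (-1) ∧
    ∃ (β'' : Fin n → ℂ) (κ'' : ℂ),
      coeffM (L * L') (-1) = vecMulVec α β'' ∧
      β'' ⬝ᵥ α = 0 ∧
      (coeffM (L * L') 0).mulVec α = κ'' • α :=
  IsLaxOperator.mul ⟨hLord, β, κ, hLm1, hβα, hL0⟩ ⟨hL'ord, β', κ', hL'm1, hβ'α, hL'0⟩

/-- For `g = gl(n)` the space of Lax operators is also closed under pointwise
multiplication, localized at a Tyurin point. -/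
theorem lax_gl_product_closed (n : ℕ) (hn : 1 ≤ n)
    (α β β' : Fin n → ℂ) (κ κ' : ℂ)
    (L L' : Matrix (Fin n) (Fin n) (LaurentSeries ℂ))
    (hLord : ordGE L (-1)) (hL'ord : ordGE L' (-1))
    (hLm1 : coeffM L (-1) = vecMulVec α β)
    (hL'm1 : coeffM L' (-1) = vecMulVec α β')
    (hβα : β ⬝ᵥ α = 0) (hβ'α : β' ⬝ᵥ α = 0)
    (hL0 : (coeffM L 0).mulVec α = κ • α)
    (hL'0 : (coeffM L' 0).mulVec α = κ' • α) :
    ordGE (L * L') (-1) ∧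
    ∃ (β'' : Fin n → ℂ) (κ'' : ℂ),
      coeffM (L * L') (-1) = vecMulVec α β'' ∧
      β'' ⬝ᵥ α = 0 ∧
      (coeffM (L * L') 0).mulVec α = κ'' • α :=
  lax_gl_product_closed_general n α β β' κ κ' L L' hLord hL'ord hLm1 hL'm1 hβα hβ'α hL0 hL'0
end

section
/- Let n ≥ 1, let σ be an n×n complex matrix, ε ∈ ℂ, let α, β̃ ∈ ℂⁿ, and let Ψ₀, Ψ₁, Ψ̃₀, Ψ̃₁, h₀, h₁, h₂ be n×n complex matrices. Assume Ψ₀·α = 0 and ε·(αᵀσα) = 0. Define L₀ := α·β̃ᵀ·σ·h₀·Ψ₁ + α·β̃ᵀ·σ·h₁·Ψ₀ + ε·α·β̃ᵀ·σ·h₂·β̃·αᵀ·σ + Ψ̃₀·h₀·Ψ₀ + ε·Ψ̃₀·h₁·β̃·αᵀ·σ + ε·Ψ̃₁·h₀·β̃·αᵀ·σ. Then L₀·α = (β̃ᵀ·σ·h₀·Ψ₁·α)·α, i.e. α is an eigenvector of L₀ with eigenvalue κ = β̃ᵀσh₀Ψ₁α. -/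
open Matrix

/-! In `L₀ α` the two terms ending in `Ψ₀` vanish because `Ψ₀ α = 0`, and the three terms
ending in `ε · β̃ αᵀ σ` vanish because they send `α` to a multiple of `ε (αᵀ σ α) = 0`.
Only `α β̃ᵀ σ h₀ Ψ₁ α = (β̃ᵀ σ h₀ Ψ₁ α) α` survives. -/

namespace Matrix

variable {m n R : Type*} [Fintype n] [CommSemiring R]

theorem vecMulVec_mulVec_eq_smul (u : m → R) (v w : n → R) :
    vecMulVec u v *ᵥ w = (v ⬝ᵥ w) • u := by
  rw [vecMulVec_mulVec, op_smul_eq_smul]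

theorem mul_mulVec_eq_zero_of_mulVec_eq_zero (A : Matrix m n R) {B : Matrix n n R}
    {v : n → R} (hB : B *ᵥ v = 0) : (A * B) *ᵥ v = 0 := by
  rw [← mulVec_mulVec, hB, mulVec_zero]

theorem mul_vecMulVec_mul_mulVec (A : Matrix m n R) (u v : n → R) (σ : Matrix n n R) :
    (A * vecMulVec u v * σ) *ᵥ v = (v ⬝ᵥ σ *ᵥ v) • (A *ᵥ u) := by
  rw [← mulVec_mulVec, ← mulVec_mulVec, vecMulVec_mulVec_eq_smul, mulVec_smul]

theorem smul_mul_vecMulVec_mul_mulVec_eq_zero {ε : R} (A : Matrix m n R) (u : n → R)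
    {v : n → R} {σ : Matrix n n R} (hε : ε * (v ⬝ᵥ σ *ᵥ v) = 0) :
    (ε • (A * vecMulVec u v * σ)) *ᵥ v = 0 := by
  rw [smul_mulVec, mul_vecMulVec_mul_mulVec, smul_smul, hε, zero_smul]

end Matrix

theorem eigenvector_of_L0_general (n : ℕ)
    (σ : Matrix (Fin n) (Fin n) ℂ) (ε : ℂ) (α βt : Fin n → ℂ)
    (Ψ₀ Ψ₁ Ψt₀ Ψt₁ h₀ h₁ h₂ : Matrix (Fin n) (Fin n) ℂ)
    (hΨ₀α : Ψ₀.mulVec α = 0)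
    (hεα : ε * (α ⬝ᵥ σ.mulVec α) = 0) :
    (vecMulVec α βt * σ * h₀ * Ψ₁
      + vecMulVec α βt * σ * h₁ * Ψ₀
      + ε • (vecMulVec α βt * σ * h₂ * vecMulVec βt α * σ)
      + Ψt₀ * h₀ * Ψ₀
      + ε • (Ψt₀ * h₁ * vecMulVec βt α * σ)
      + ε • (Ψt₁ * h₀ * vecMulVec βt α * σ)).mulVec α
    = (βt ⬝ᵥ (σ * h₀ * Ψ₁).mulVec α) • α := by
  have hΨ₁ : (vecMulVec α βt * σ * h₀ * Ψ₁) *ᵥ α = (βt ⬝ᵥ (σ * h₀ * Ψ₁) *ᵥ α) • α := by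
    simp only [Matrix.mul_assoc, ← mulVec_mulVec, vecMulVec_mulVec_eq_smul]
  simp only [add_mulVec, hΨ₁, mul_mulVec_eq_zero_of_mulVec_eq_zero _ hΨ₀α,
    smul_mul_vecMulVec_mul_mulVec_eq_zero _ _ hεα, add_zero]

/-- `α` is an eigenvector of the `z⁰` coefficient `L₀` of `Ψ⁻¹hΨ`, with eigenvalue
`κ = β̃ᵀσh₀Ψ₁α`. -/
theorem eigenvector_of_L0 (n : ℕ) (hn : 1 ≤ n)
    (σ : Matrix (Fin n) (Fin n) ℂ) (ε : ℂ) (α βt : Fin n → ℂ)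
    (Ψ₀ Ψ₁ Ψt₀ Ψt₁ h₀ h₁ h₂ : Matrix (Fin n) (Fin n) ℂ)
    (hΨ₀α : Ψ₀.mulVec α = 0)
    (hεα : ε * (α ⬝ᵥ σ.mulVec α) = 0) :
    (vecMulVec α βt * σ * h₀ * Ψ₁
      + vecMulVec α βt * σ * h₁ * Ψ₀
      + ε • (vecMulVec α βt * σ * h₂ * vecMulVec βt α * σ)
      + Ψt₀ * h₀ * Ψ₀
      + ε • (Ψt₀ * h₁ * vecMulVec βt α * σ)
      + ε • (Ψt₁ * h₀ * vecMulVec βt α * σ)).mulVec α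
    = (βt ⬝ᵥ (σ * h₀ * Ψ₁).mulVec α) • α :=
  eigenvector_of_L0_general n σ ε α βt Ψ₀ Ψ₁ Ψt₀ Ψt₁ h₀ h₁ h₂ hΨ₀α hεα
end

section
/- Let n ≥ 1, let σ be an invertible skew-symmetric 2n×2n complex matrix, and α, β̃ ∈ ℂ^{2n}. Let Ψ and Φ be 2n×2n matrices over ℂ((z)) of order ≥ −1 with Ψ·Φ = Φ·Ψ = 1, Ψ_{−1} = β̃·αᵀ·σ, Φ_{−1} = α·β̃ᵀ·σ, and Ψᵀ = −σ·Φ·σ⁻¹ (transposition applied coefficientwise). Assume Ψ₀·α = 0 and αᵀ·σ·Φ₀ = 0. Let h be a diagonal 2n×2n matrix over ℂ((z)) of order ≥ 0 with hᵀ = −σ·h·σ⁻¹. Then L := Φ·h·Ψ has order ≥ −2, every coefficient X of L satisfies Xᵀσ + σX = 0, and there exist ν, κ ∈ ℂ and β ∈ ℂ^{2n} such that L_{−2} = ν·α·αᵀ·σ, L_{−1} = (α·βᵀ + β·αᵀ)·σ, βᵀσα = 0, L_0·α = κ·α, and αᵀσL_1α = 0. (This is the symplectic case, ε = 1, of the Lemma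 that Ψ⁻¹hΨ lies in the Lax operator algebra, localized at a Tyurin point γ.) -/
/-!
Write `S` for the form `σ`, viewed as a constant matrix of Laurent series. The hypothesis
`Ψᵀ = -σΦσ⁻¹` says that `(Ψ, -Φ)` is an adjoint pair for `S`; as `S` is skew, so is `(Φ, -Ψ)`,
and `h` is `S`-skew-adjoint. Adjoint pairs multiply, so `L = Φ h Ψ` is paired with
`(-Φ)(-h)(-Ψ) = -L`, i.e. `L` is `S`-skew-adjoint, and since `S` is constant this holds for every
coefficient of `L`.

For the Laurent tail, `αᵀσα = 0` and the rank-one polar parts make `α` a right null vector of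
`Ψ₋₁, Ψ₀` and `αᵀσ` a left null vector of `Φ₋₁, Φ₀`, hence of `(Φh)₋₁, (Φh)₀`. This kills every
term of `αᵀσ L₁ α` and all but `(Φh)₋₁ Ψ₁ α` in `L₀ α`. The coefficients `L₋₂` and `L₋₁` are
computed directly; `L₋₁` takes the symmetric shape because `(Φ₀h₀)ᵀσ = σh₀Ψ₀`, the
constant-term instance of the adjoint-pair calculus.
-/

open Matrix

namespace Matrix

variable {R : Type*} [CommRing R] {m : Type*} [Fintype m] {J A A' B B' : Matrix m m R}

theorem IsAdjointPair.mul (hA : IsAdjointPair J J A A') (hB : IsAdjointPair J J B B') :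
    IsAdjointPair J J (A * B) (B' * A') := by
  unfold IsAdjointPair at *
  rw [transpose_mul, Matrix.mul_assoc, hA, ← Matrix.mul_assoc, hB, Matrix.mul_assoc]

theorem IsAdjointPair.neg (hA : IsAdjointPair J J A A') : IsAdjointPair J J (-A) (-A') := by
  unfold IsAdjointPair at *
  rw [transpose_neg, Matrix.neg_mul, Matrix.mul_neg, hA]

theorem IsAdjointPair.symm_of_transpose_eq_neg (hJ : Jᵀ = -J) (hA : IsAdjointPair J J A A') :
    IsAdjointPair J J A' A := by
  have := congrArg transpose hA
  simp only [IsAdjointPair, transpose_mul, transpose_transpose, hJ, Matrix.neg_mul,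
    Matrix.mul_neg, neg_inj] at this ⊢
  exact this.symm

theorem isAdjointPair_neg_of_transpose_eq_neg [DecidableEq m] (hJ : IsUnit J.det)
    (h : Aᵀ = -(J * A' * J⁻¹)) : IsAdjointPair J J A (-A') := by
  rw [IsAdjointPair, h, Matrix.neg_mul, Matrix.mul_assoc, nonsing_inv_mul _ hJ, Matrix.mul_one,
    Matrix.mul_neg]

theorem isAdjointPair_mul_of_neg (hJ : Jᵀ = -J) (hA : IsAdjointPair J J A (-A'))
    (hB : J.IsSkewAdjoint B) : IsAdjointPair J J (A' * B) (B * A) := by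
  simpa using ((hA.symm_of_transpose_eq_neg hJ).neg.mul hB)

theorem isSkewAdjoint_mul_mul_of_neg (hJ : Jᵀ = -J) (hA : IsAdjointPair J J A (-A'))
    (hB : J.IsSkewAdjoint B) : J.IsSkewAdjoint (A' * B * A) := by
  simpa [Matrix.IsSkewAdjoint, Matrix.mul_assoc] using (isAdjointPair_mul_of_neg hJ hA hB).mul hA

theorem dotProduct_mulVec_self_eq_zero_of_transpose_eq_neg [IsAddTorsionFree R]
    (hJ : Jᵀ = -J) (v : m → R) : v ⬝ᵥ J *ᵥ v = 0 := by
  have h : v ⬝ᵥ J *ᵥ v = -(v ⬝ᵥ J *ᵥ v) := by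
    conv_lhs => rw [dotProduct_mulVec, ← mulVec_transpose, hJ, neg_mulVec, neg_dotProduct,
      dotProduct_comm]
  exact self_eq_neg.mp h

theorem vecMulVec_mul_mul_vecMulVec (u v w x : m → R) (A : Matrix m m R) :
    vecMulVec u v * A * vecMulVec w x = (v ⬝ᵥ A *ᵥ w) • vecMulVec u x := by
  rw [vecMulVec_mul, vecMulVec_mul_vecMulVec, vecMulVec_smul, dotProduct_mulVec]

end Matrix

theorem HahnSeries.coeff_mul_eq_sum_Icc {R : Type*} [NonUnitalNonAssocSemiring R]
    {f g : HahnSeries ℤ R} {a b : ℤ} (hf : ∀ i < a, f.coeff i = 0) (hg : ∀ j < b, g.coeff j = 0)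
    (k : ℤ) : (f * g).coeff k = ∑ i ∈ Finset.Icc a (k - b), f.coeff i * g.coeff (k - i) := by
  rw [HahnSeries.coeff_mul, ← Finset.sum_image (f := fun p : ℤ × ℤ => f.coeff p.1 * g.coeff p.2)
    (g := fun i => (i, k - i)) fun _ _ _ _ h => (Prod.ext_iff.mp h).1]
  refine Finset.sum_subset (fun p hp => ?_) (fun p hp hnp => ?_)
  · obtain ⟨hp₁, hp₂, hsum⟩ := Finset.mem_antidiagonal.mp hp
    have ha : a ≤ p.1 := not_lt.mp fun h => hp₁ (hf _ h)
    have hb : b ≤ p.2 := not_lt.mp fun h => hp₂ (hg _ h)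
    exact Finset.mem_image.mpr ⟨p.1, Finset.mem_Icc.mpr ⟨ha, by omega⟩, by ext <;> simp; omega⟩
  · obtain ⟨i, -, rfl⟩ := Finset.mem_image.mp hp
    simp only [Finset.mem_antidiagonal, HahnSeries.mem_support, add_sub_cancel, and_true,
      not_and_or, not_not] at hnp
    rcases hnp with h | h <;> simp [h]

section coeffM

variable {N : ℕ} {A B : Matrix (Fin N) (Fin N) (LaurentSeries ℂ)} {a b : ℤ}

theorem coeffM_injective : Function.Injective fun A : Matrix (Fin N) (Fin N) (LaurentSeries ℂ) =>
    coeffM A := fun _ _ h => by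
  ext i j k
  exact congrFun (congrFun (congrFun h k) i) j

@[simp]
theorem coeffM_transpose (k : ℤ) : coeffM Aᵀ k = (coeffM A k)ᵀ := rfl

theorem coeffM_map_C_mul (S : Matrix (Fin N) (Fin N) ℂ) (k : ℤ) :
    coeffM (S.map HahnSeries.C * A) k = S * coeffM A k := by
  ext p q
  simp [coeffM, mul_apply, HahnSeries.coeff_sum]

theorem coeffM_mul_map_C (S : Matrix (Fin N) (Fin N) ℂ) (k : ℤ) :
    coeffM (A * S.map HahnSeries.C) k = coeffM A k * S := by
  ext p q
  simp [coeffM, mul_apply, HahnSeries.coeff_sum, HahnSeries.C_apply]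

theorem isAdjointPair_map_C_iff (S : Matrix (Fin N) (Fin N) ℂ) :
    (S.map HahnSeries.C).IsAdjointPair (S.map HahnSeries.C) A B ↔
      ∀ k, S.IsAdjointPair S (coeffM A k) (coeffM B k) := by
  simp only [IsAdjointPair, ← coeffM_injective.eq_iff, funext_iff, coeffM_mul_map_C,
    coeffM_map_C_mul, coeffM_transpose]

theorem coeffM_mul (hA : ordGE A a) (hB : ordGE B b) (k : ℤ) :
    coeffM (A * B) k = ∑ i ∈ Finset.Icc a (k - b), coeffM A i * coeffM B (k - i) := by
  ext p q
  simp only [coeffM, mul_apply, HahnSeries.coeff_sum, Matrix.sum_apply]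
  rw [Finset.sum_comm]
  exact Finset.sum_congr rfl fun r _ => HahnSeries.coeff_mul_eq_sum_Icc
    (fun i hi => congrFun (congrFun (hA i hi) p) r) (fun j hj => congrFun (congrFun (hB j hj) r) q) k

theorem ordGE_mul (hA : ordGE A a) (hB : ordGE B b) : ordGE (A * B) (a + b) := fun k hk => by
  rw [coeffM_mul hA hB, Finset.Icc_eq_empty (by omega), Finset.sum_empty]

theorem coeffM_mul_add (hA : ordGE A a) (hB : ordGE B b) :
    coeffM (A * B) (a + b) = coeffM A a * coeffM B b := by
  rw [coeffM_mul hA hB, add_sub_cancel_right, Finset.Icc_self, Finset.sum_singleton,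
    add_sub_cancel_left]

theorem coeffM_mul_add_add_one (hA : ordGE A a) (hB : ordGE B b) :
    coeffM (A * B) (a + b + 1) =
      coeffM A a * coeffM B (b + 1) + coeffM A (a + 1) * coeffM B b := by
  rw [coeffM_mul hA hB, show Finset.Icc a (a + b + 1 - b) = {a, a + 1} by ext; simp; omega,
    Finset.sum_pair (by omega)]
  congr 3 <;> ring

theorem coeffM_mul_mulVec_of_mulVec_eq_zero (hA : ordGE A a) (hB : ordGE B b) {q : ℤ}
    {v : Fin N → ℂ} (hv : ∀ j < q, coeffM B j *ᵥ v = 0) :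
    coeffM (A * B) (a + q) *ᵥ v = coeffM A a *ᵥ coeffM B q *ᵥ v := by
  rw [coeffM_mul hA hB, sum_mulVec, Finset.sum_eq_single a]
  · rw [add_sub_cancel_left, mulVec_mulVec]
  · intro i hi hia
    rw [← mulVec_mulVec, hv _ (by simp at hi; omega), mulVec_zero]
  · intro ha
    rw [add_sub_cancel_left, hB q (by simp at ha; omega), Matrix.mul_zero, zero_mulVec]

theorem vecMul_coeffM_mul_eq_zero (hA : ordGE A a) (hB : ordGE B b) {p k : ℤ}
    {u : Fin N → ℂ} (hu : ∀ i < p, u ᵥ* coeffM A i = 0) (hk : k < p + b) :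
    u ᵥ* coeffM (A * B) k = 0 := by
  rw [coeffM_mul hA hB, vecMul_sum]
  refine Finset.sum_eq_zero fun i hi => ?_
  rw [← vecMul_vecMul, hu i (by simp at hi; omega), zero_vecMul]

theorem dotProduct_coeffM_mul_mulVec_eq_zero (hA : ordGE A a) (hB : ordGE B b) {p q k : ℤ}
    {u v : Fin N → ℂ} (hu : ∀ i < p, u ᵥ* coeffM A i = 0) (hv : ∀ j < q, coeffM B j *ᵥ v = 0)
    (hk : k < p + q) : u ⬝ᵥ coeffM (A * B) k *ᵥ v = 0 := by
  rw [coeffM_mul hA hB, sum_mulVec, dotProduct_sum]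
  refine Finset.sum_eq_zero fun i _ => ?_
  rw [← mulVec_mulVec, dotProduct_mulVec]
  rcases lt_or_ge i p with hi | hi
  · rw [hu i hi, zero_dotProduct]
  · rw [hv _ (by omega), dotProduct_zero]

end coeffM

section TyurinPoint

variable {N : ℕ} {σ : Matrix (Fin N) (Fin N) ℂ} {α βt : Fin N → ℂ}
  {Ψ Φ h : Matrix (Fin N) (Fin N) (LaurentSeries ℂ)}

theorem isSkewAdjoint_coeffM_mul_mul (hσdet : IsUnit σ.det) (hσskew : σᵀ = -σ)
    (hΨsp : ∀ k, (coeffM Ψ k)ᵀ = -(σ * coeffM Φ k * σ⁻¹))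
    (hhcart : ∀ k, (coeffM h k)ᵀ = -(σ * coeffM h k * σ⁻¹)) (k : ℤ) :
    σ.IsSkewAdjoint (coeffM (Φ * h * Ψ) k) := by
  have hS : (σ.map HahnSeries.C)ᵀ = -σ.map (HahnSeries.C : ℂ →+* LaurentSeries ℂ) := by
    rw [← transpose_map, hσskew, Matrix.map_neg _ (map_neg _)]
  have hΨ := (isAdjointPair_map_C_iff (A := Ψ) (B := -Φ) σ).2 fun k =>
    isAdjointPair_neg_of_transpose_eq_neg hσdet (hΨsp k)
  have hh := (isAdjointPair_map_C_iff (A := h) (B := -h) σ).2 fun k =>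
    isAdjointPair_neg_of_transpose_eq_neg hσdet (hhcart k)
  exact (isAdjointPair_map_C_iff σ).1 (isSkewAdjoint_mul_mul_of_neg hS hΨ hh) k

theorem coeffM_mulVec_eq_zero_of_lt_one (hΨord : ordGE Ψ (-1))
    (hΨm1 : coeffM Ψ (-1) = vecMulVec βt α * σ) (hασα : α ⬝ᵥ σ *ᵥ α = 0)
    (hΨ₀α : coeffM Ψ 0 *ᵥ α = 0) : ∀ j < 1, coeffM Ψ j *ᵥ α = 0 := by
  intro j hj
  rcases (by omega : j < -1 ∨ j = -1 ∨ j = 0) with hj | rfl | rfl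
  · rw [hΨord j hj, zero_mulVec]
  · rw [hΨm1, ← mulVec_mulVec, vecMulVec_mulVec, hασα]
    simp
  · exact hΨ₀α

theorem vecMul_coeffM_eq_zero_of_lt_one (hΦord : ordGE Φ (-1))
    (hΦm1 : coeffM Φ (-1) = vecMulVec α βt * σ) (hασα : α ⬝ᵥ σ *ᵥ α = 0)
    (hΦ₀α : α ᵥ* (σ * coeffM Φ 0) = 0) : ∀ i < 1, (α ᵥ* σ) ᵥ* coeffM Φ i = 0 := by
  intro i hi
  rcases (by omega : i < -1 ∨ i = -1 ∨ i = 0) with hi | rfl | rfl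
  · rw [hΦord i hi, vecMul_zero]
  · rw [hΦm1, vecMul_vecMul, ← Matrix.mul_assoc, mul_vecMulVec, ← vecMul_vecMul,
      vecMul_vecMulVec, hασα]
    simp
  · rwa [vecMul_vecMul]

theorem coeffM_mul_mul_neg_two (hΨord : ordGE Ψ (-1)) (hΦord : ordGE Φ (-1))
    (hhord : ordGE h 0) (hΨm1 : coeffM Ψ (-1) = vecMulVec βt α * σ)
    (hΦm1 : coeffM Φ (-1) = vecMulVec α βt * σ) :
    coeffM (Φ * h * Ψ) (-2) = (βt ⬝ᵥ (σ * coeffM h 0) *ᵥ βt) • (vecMulVec α α * σ) := by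
  rw [show (-2 : ℤ) = -1 + 0 + -1 by norm_num, coeffM_mul_add (ordGE_mul hΦord hhord) hΨord,
    coeffM_mul_add hΦord hhord, hΦm1, hΨm1, ← Matrix.mul_assoc,
    Matrix.mul_assoc (vecMulVec α βt) σ, vecMulVec_mul_mul_vecMulVec, smul_mul]

theorem exists_coeffM_mul_mul_neg_one (hΨord : ordGE Ψ (-1)) (hΦord : ordGE Φ (-1))
    (hhord : ordGE h 0) (hΨm1 : coeffM Ψ (-1) = vecMulVec βt α * σ)
    (hΦm1 : coeffM Φ (-1) = vecMulVec α βt * σ) (hασα : α ⬝ᵥ σ *ᵥ α = 0)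
    (hΨ₀α : coeffM Ψ 0 *ᵥ α = 0)
    (hΦh₀ : σ.IsAdjointPair σ (coeffM Φ 0 * coeffM h 0) (coeffM h 0 * coeffM Ψ 0)) :
    ∃ β, coeffM (Φ * h * Ψ) (-1) = (vecMulVec α β + vecMulVec β α) * σ ∧
      β ⬝ᵥ σ *ᵥ α = 0 := by
  set γ := (coeffM Φ 0 * coeffM h 0) *ᵥ βt with hγ
  set c := βt ⬝ᵥ (σ * coeffM h 1) *ᵥ βt
  have hγσ : γ ᵥ* σ = βt ᵥ* (σ * coeffM h 0 * coeffM Ψ 0) := by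
    rw [hγ, ← vecMul_transpose, vecMul_vecMul, hΦh₀, Matrix.mul_assoc]
  -- the term `c • vecMulVec α α * σ` is split evenly between `α βᵀ σ` and `β αᵀ σ`
  refine ⟨γ + (c / 2) • α, ?_, ?_⟩
  · have hMm1 := coeffM_mul_add hΦord hhord
    have hM0 := coeffM_mul_add_add_one hΦord hhord
    have hL := coeffM_mul_add_add_one (ordGE_mul hΦord hhord) hΨord
    norm_num at hMm1 hM0 hL
    rw [hL, hMm1, hM0, hΦm1, hΨm1,
      Matrix.mul_assoc (vecMulVec α βt) σ (coeffM h 0), Matrix.mul_assoc, vecMulVec_mul, ← hγσ,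
      ← vecMulVec_mul, Matrix.add_mul, ← Matrix.mul_assoc, Matrix.mul_assoc (vecMulVec α βt) σ,
      vecMulVec_mul_mul_vecMulVec, ← Matrix.mul_assoc, mul_vecMulVec]
    simp only [vecMulVec_add, add_vecMulVec, vecMulVec_smul, smul_vecMulVec, Matrix.add_mul,
      Matrix.smul_mul]
    module
  · rw [add_dotProduct, smul_dotProduct, hασα, smul_zero, add_zero, dotProduct_mulVec, hγσ,
      ← dotProduct_mulVec, ← mulVec_mulVec, hΨ₀α, mulVec_zero, dotProduct_zero]

theorem coeffM_mul_mul_zero_mulVec (hΨord : ordGE Ψ (-1)) (hΦord : ordGE Φ (-1))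
    (hhord : ordGE h 0) (hΦm1 : coeffM Φ (-1) = vecMulVec α βt * σ)
    (hΨα : ∀ j < 1, coeffM Ψ j *ᵥ α = 0) :
    coeffM (Φ * h * Ψ) 0 *ᵥ α = (βt ᵥ* (σ * coeffM h 0 * coeffM Ψ 1) ⬝ᵥ α) • α := by
  rw [show (0 : ℤ) = -1 + 0 + 1 by norm_num,
    coeffM_mul_mulVec_of_mulVec_eq_zero (ordGE_mul hΦord hhord) hΨord hΨα,
    coeffM_mul_add hΦord hhord, hΦm1, mulVec_mulVec, Matrix.mul_assoc, Matrix.mul_assoc,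
    vecMulVec_mul, vecMulVec_mulVec]
  simp [Matrix.mul_assoc]

end TyurinPoint

theorem conjugated_diagonal_is_lax_sp_general (n : ℕ)
    (σ : Matrix (Fin (2 * n)) (Fin (2 * n)) ℂ) (hσdet : IsUnit σ.det) (hσskew : σᵀ = -σ)
    (α βt : Fin (2 * n) → ℂ)
    (Ψ Φ : Matrix (Fin (2 * n)) (Fin (2 * n)) (LaurentSeries ℂ))
    (hΨord : ordGE Ψ (-1)) (hΦord : ordGE Φ (-1))
    (hΨm1 : coeffM Ψ (-1) = vecMulVec βt α * σ)
    (hΦm1 : coeffM Φ (-1) = vecMulVec α βt * σ)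
    (hΨsp : ∀ k : ℤ, (coeffM Ψ k)ᵀ = -(σ * coeffM Φ k * σ⁻¹))
    (hΨ₀α : (coeffM Ψ 0).mulVec α = 0)
    (hΦ₀α : vecMul α (σ * coeffM Φ 0) = 0)
    (h : Matrix (Fin (2 * n)) (Fin (2 * n)) (LaurentSeries ℂ))
    (hhord : ordGE h 0)
    (hhcart : ∀ k : ℤ, (coeffM h k)ᵀ = -(σ * coeffM h k * σ⁻¹)) :
    ordGE (Φ * h * Ψ) (-2) ∧
    (∀ k : ℤ, (coeffM (Φ * h * Ψ) k)ᵀ * σ + σ * coeffM (Φ * h * Ψ) k = 0) ∧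
    ∃ (ν κ : ℂ) (β : Fin (2 * n) → ℂ),
      coeffM (Φ * h * Ψ) (-2) = ν • (vecMulVec α α * σ) ∧
      coeffM (Φ * h * Ψ) (-1) = (vecMulVec α β + vecMulVec β α) * σ ∧
      β ⬝ᵥ σ.mulVec α = 0 ∧
      (coeffM (Φ * h * Ψ) 0).mulVec α = κ • α ∧
      α ⬝ᵥ (σ * coeffM (Φ * h * Ψ) 1).mulVec α = 0 := by
  have hασα := dotProduct_mulVec_self_eq_zero_of_transpose_eq_neg hσskew α
  have hΨα := coeffM_mulVec_eq_zero_of_lt_one hΨord hΨm1 hασα hΨ₀α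
  have hαΦ := vecMul_coeffM_eq_zero_of_lt_one hΦord hΦm1 hασα hΦ₀α
  have hM : ordGE (Φ * h) (-1) := by simpa using ordGE_mul hΦord hhord
  have hΦh₀ := isAdjointPair_mul_of_neg hσskew
    (isAdjointPair_neg_of_transpose_eq_neg hσdet (hΨsp 0))
    (isAdjointPair_neg_of_transpose_eq_neg hσdet (hhcart 0))
  obtain ⟨β, hLm1, hβ⟩ :=
    exists_coeffM_mul_mul_neg_one hΨord hΦord hhord hΨm1 hΦm1 hασα hΨ₀α hΦh₀
  refine ⟨by simpa using ordGE_mul hM hΨord, fun k => ?_, _, _, β,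
    coeffM_mul_mul_neg_two hΨord hΦord hhord hΨm1 hΦm1, hLm1, hβ,
    coeffM_mul_mul_zero_mulVec hΨord hΦord hhord hΦm1 hΨα, ?_⟩
  · rw [isSkewAdjoint_coeffM_mul_mul hσdet hσskew hΨsp hhcart k, Matrix.mul_neg, neg_add_cancel]
  · rw [← mulVec_mulVec, dotProduct_mulVec]
    exact dotProduct_coeffM_mul_mulVec_eq_zero hM hΨord
      (fun i hi => vecMul_coeffM_mul_eq_zero hΦord hhord hαΦ (by simpa using hi)) hΨα
      (by norm_num)

/-- The symplectic case (`ε = 1`) of the Lemma: `Ψ⁻¹hΨ` lies in the Lax operator algebra,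
localized at a Tyurin point. -/
theorem conjugated_diagonal_is_lax_sp (n : ℕ) (hn : 1 ≤ n)
    (σ : Matrix (Fin (2 * n)) (Fin (2 * n)) ℂ) (hσdet : IsUnit σ.det) (hσskew : σᵀ = -σ)
    (α βt : Fin (2 * n) → ℂ)
    (Ψ Φ : Matrix (Fin (2 * n)) (Fin (2 * n)) (LaurentSeries ℂ))
    (hΨord : ordGE Ψ (-1)) (hΦord : ordGE Φ (-1))
    (hΨΦ : Ψ * Φ = 1) (hΦΨ : Φ * Ψ = 1)
    (hΨm1 : coeffM Ψ (-1) = vecMulVec βt α * σ)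
    (hΦm1 : coeffM Φ (-1) = vecMulVec α βt * σ)
    (hΨsp : ∀ k : ℤ, (coeffM Ψ k)ᵀ = -(σ * coeffM Φ k * σ⁻¹))
    (hΨ₀α : (coeffM Ψ 0).mulVec α = 0)
    (hΦ₀α : vecMul α (σ * coeffM Φ 0) = 0)
    (h : Matrix (Fin (2 * n)) (Fin (2 * n)) (LaurentSeries ℂ))
    (hhord : ordGE h 0) (hhdiag : ∀ k : ℤ, (coeffM h k).IsDiag)
    (hhcart : ∀ k : ℤ, (coeffM h k)ᵀ = -(σ * coeffM h k * σ⁻¹)) :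
    ordGE (Φ * h * Ψ) (-2) ∧
    (∀ k : ℤ, (coeffM (Φ * h * Ψ) k)ᵀ * σ + σ * coeffM (Φ * h * Ψ) k = 0) ∧
    ∃ (ν κ : ℂ) (β : Fin (2 * n) → ℂ),
      coeffM (Φ * h * Ψ) (-2) = ν • (vecMulVec α α * σ) ∧
      coeffM (Φ * h * Ψ) (-1) = (vecMulVec α β + vecMulVec β α) * σ ∧
      β ⬝ᵥ σ.mulVec α = 0 ∧
      (coeffM (Φ * h * Ψ) 0).mulVec α = κ • α ∧
      α ⬝ᵥ (σ * coeffM (Φ * h * Ψ) 1).mulVec α = 0 :=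
  conjugated_diagonal_is_lax_sp_general n σ hσdet hσskew α βt Ψ Φ hΨord hΦord hΨm1 hΦm1 hΨsp hΨ₀α
    hΦ₀α h hhord hhcart
end
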